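/- Let Q be a full acyclic conjunctive query and L a total lexicographic order of its variables. If Q has no disruptive trio with respect to L, then there exists a layered join tree for Q with respect to L. -/

import Mathlib

/-!
Give layer `i` the bag of variables `L[j]`, `j ≤ i`, adjacent to `L[i]`, and hang it below the
latest earlier layer whose variable is adjacent to `L[i]`. Without disruptive trios every bag is a
clique of the primal graph, and a variable of a bag reappears in the bag of its parent, which gives
the running intersection property. Cliques lie inside hyperedges because the sets of join-tree
nodes containing a given variable are subtrees, which have the Helly property. Parents precede
their children, so the tree is built by attaching one layer at a time.
-/

/-- Two vertices are neighbors in a hypergraph if some hyperedge contains both. -/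
def Nbr {V : Type*} (E : Finset (Finset V)) (x y : V) : Prop :=
  ∃ e ∈ E, x ∈ e ∧ y ∈ e

/-- A disruptive trio w.r.t. a neighborhood relation `nbr` and an order `L`. -/
def DTrio {V : Type*} [DecidableEq V] (nbr : V → V → Prop) (L : List V) : Prop :=
  ∃ a b c, a ∈ L ∧ b ∈ L ∧ c ∈ L ∧ a ≠ b ∧ ¬ nbr a b ∧ nbr a c ∧ nbr b c ∧
    L.idxOf a < L.idxOf c ∧ L.idxOf b < L.idxOf c

/-- Join tree: a tree on the hyperedges with the running intersection property. -/
def IsJoinTreeOf {V ι : Type*} (T : SimpleGraph ι) (lab : ι → Finset V)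
    (E : Finset (Finset V)) : Prop :=
  T.IsTree ∧ (∀ i, lab i ∈ E) ∧ (∀ e ∈ E, ∃ i, lab i = e) ∧
    ∀ v : V, (T.induce {i | v ∈ lab i}).Preconnected

/-- A hypergraph is acyclic if it admits a join tree. -/
def HGAcyclic {V : Type*} (E : Finset (Finset V)) : Prop :=
  ∃ (ι : Type) (T : SimpleGraph ι) (lab : ι → Finset V), IsJoinTreeOf T lab E

/-- A layered join tree for a full CQ with hypergraph `E` w.r.t. the variable
order `L`: a join tree (with the running intersection property) of a hypergraph
that is inclusion equivalent to `E`, with exactly one node per layer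
`1, …, |L|`, where the node of layer `i` contains `L[i]` and only variables
among the first `i+1` ones, and every prefix of layers induces a (connected)
tree. -/
structure LayeredJoinTree {V : Type*} [DecidableEq V]
    (E : Finset (Finset V)) (L : List V) where
  T : SimpleGraph (Fin L.length)
  isTree : T.IsTree
  lab : Fin L.length → Finset V
  incl1 : ∀ i, ∃ e ∈ E, lab i ⊆ e
  incl2 : ∀ e ∈ E, ∃ i, e ⊆ lab i
  rip : ∀ v : V, (T.induce {i | v ∈ lab i}).Preconnected
  layerMem : ∀ i : Fin L.length, L.get i ∈ lab i
  layerSub : ∀ i : Fin L.length, lab i ⊆ (L.take ((i : ℕ) + 1)).toFinset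
  prefixConn : ∀ j : ℕ, (T.induce {i : Fin L.length | (i : ℕ) < j}).Preconnected

namespace SimpleGraph

variable {ι : Type*} {T : SimpleGraph ι}

theorem IsTree.support_subset_of_preconnected_induce (hT : T.IsTree) {s : Set ι}
    (hs : (T.induce s).Preconnected) {u v : ι} (hu : u ∈ s) (hv : v ∈ s) {p : T.Walk u v}
    (hp : p.IsPath) : ∀ x ∈ p.support, x ∈ s := by
  classical
  obtain ⟨w⟩ := hs ⟨u, hu⟩ ⟨v, hv⟩
  set w' := w.map (Embedding.induce s).toHom
  have hpw : p = w'.bypass :=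
    congrArg Subtype.val <|
      (hT.isAcyclic.subsingleton_path u v).elim ⟨p, hp⟩ ⟨_, w'.bypass_isPath⟩
  intro x hx
  obtain ⟨y, -, rfl⟩ := List.mem_map.mp <|
    (Walk.support_map _ w) ▸ w'.support_bypass_subset_support (hpw ▸ hx)
  exact y.2

theorem IsTree.preconnected_induce_inter (hT : T.IsTree) {A B : Set ι}
    (hA : (T.induce A).Preconnected) (hB : (T.induce B).Preconnected) :
    (T.induce (A ∩ B)).Preconnected := by
  rintro ⟨u, huA, huB⟩ ⟨v, hvA, hvB⟩
  obtain ⟨p, hp⟩ := hT.connected.preconnected.exists_isPath u v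
  exact ⟨p.induce (A ∩ B) fun x hx =>
    ⟨hT.support_subset_of_preconnected_induce hA huA hvA hp x hx,
      hT.support_subset_of_preconnected_induce hB huB hvB hp x hx⟩⟩

theorem IsTree.inter_inter_nonempty (hT : T.IsTree) {A B C : Set ι}
    (hA : (T.induce A).Preconnected) (hB : (T.induce B).Preconnected)
    (hC : (T.induce C).Preconnected) (hAB : (A ∩ B).Nonempty) (hAC : (A ∩ C).Nonempty)
    (hBC : (B ∩ C).Nonempty) : (A ∩ B ∩ C).Nonempty := by
  classical
  obtain ⟨x, hxA, hxB⟩ := hAB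
  obtain ⟨y, hyA, hyC⟩ := hAC
  obtain ⟨z, hzB, hzC⟩ := hBC
  obtain ⟨p, hp⟩ := hT.connected.preconnected.exists_isPath y z
  -- `m` is the first vertex of the `y`–`z` path in `B`. Going on from `m` to `x` inside `B` never
  -- revisits that path before `m`, so this detour is the `y`–`x` path and `m ∈ A`.
  obtain ⟨m, hm, hmp, hfirst⟩ := p.exists_mem_support_forall_mem_support_imp_eq
    {t ∈ p.support.toFinset | t ∈ B} ⟨z, by simp [hzB]⟩
  rw [Finset.mem_filter, List.mem_toFinset] at hm
  set q := p.takeUntil m hmp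
  obtain ⟨r, hr⟩ := hT.connected.preconnected.exists_isPath m x
  have hqr : (q.append r).IsPath := by
    rw [Walk.isPath_def, Walk.support_append]
    refine (hp.takeUntil hmp).support_nodup.append
      (hr.support_nodup.sublist r.support.tail_sublist) fun a haq har => ?_
    have hrB := hT.support_subset_of_preconnected_induce hB hm.2 hxB hr a
      (List.mem_of_mem_tail har)
    obtain rfl := hfirst a (by simp [p.support_takeUntil_subset_support hmp haq, hrB]) haq
    have := hr.support_nodup
    rw [← r.cons_tail_support] at this
    exact (List.nodup_cons.mp this).1 har
  refine ⟨m, ⟨?_, hm.2⟩, hT.support_subset_of_preconnected_induce hC hyC hzC hp m hmp⟩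
  exact hT.support_subset_of_preconnected_induce hA hyA hxA hqr m
    (by simp [Walk.support_append])

theorem IsTree.exists_forall_mem_of_pairwise_inter_nonempty {α : Type*} (hT : T.IsTree)
    {S : Finset α} (hS : S.Nonempty) {A : α → Set ι}
    (hA : ∀ a ∈ S, (T.induce (A a)).Preconnected)
    (hAA : ∀ a ∈ S, ∀ b ∈ S, (A a ∩ A b).Nonempty) : ∃ x, ∀ a ∈ S, x ∈ A a := by
  induction hS using Finset.Nonempty.cons_induction generalizing A with
  | singleton a =>
    obtain ⟨x, hx, -⟩ := hAA a (by simp) a (by simp)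
    exact ⟨x, by simpa using hx⟩
  | cons a S haS hS ih =>
    simp only [Finset.mem_cons, forall_eq_or_imp] at hA hAA ⊢
    obtain ⟨x, hx⟩ := ih (A := fun b => A a ∩ A b)
      (fun b hb => hT.preconnected_induce_inter hA.1 (hA.2 b hb))
      fun b hb c hc =>
        (hT.inter_inter_nonempty hA.1 (hA.2 b hb) (hA.2 c hc) (hAA.1.2 b hb) (hAA.1.2 c hc)
          (hAA.2 b hb |>.2 c hc)).mono fun x hx => ⟨hx.1, hx.1.1, hx.2⟩
    obtain ⟨b, hb⟩ := hS
    exact ⟨x, (hx b hb).1, fun c hc => (hx c hc).2⟩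

theorem preconnected_induce_of_exists_adj_lt [LinearOrder ι] [WellFoundedLT ι]
    {G : SimpleGraph ι} {s : Set ι}
    (h : ∀ i ∈ s, ∀ k ∈ s, k < i → ∃ j ∈ s, j < i ∧ G.Adj i j) :
    (G.induce s).Preconnected := by
  rintro ⟨x, hx⟩ ⟨y, hy⟩
  obtain ⟨m, hm, hmin⟩ := wellFounded_lt.has_min s ⟨x, hx⟩
  have hreach (i : ι) (hi : i ∈ s) : (G.induce s).Reachable ⟨i, hi⟩ ⟨m, hm⟩ := by
    induction i using WellFoundedLT.induction with
    | _ i ih =>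
      rcases (not_lt.mp (hmin i hi)).eq_or_lt with rfl | hmi
      · rfl
      obtain ⟨j, hj, hji, hij⟩ := h i hi m hm hmi
      exact (show (G.induce s).Adj ⟨i, hi⟩ ⟨j, hj⟩ from hij).reachable.trans (ih j hji hj)
  exact (hreach x hx).trans (hreach y hy).symm

theorem isTree_of_connected_of_lower_adj_unique [LinearOrder ι] [Finite ι] {G : SimpleGraph ι}
    (hG : G.Connected)
    (h : ∀ ⦃i j k⦄, G.Adj i j → G.Adj i k → j < i → k < i → j = k) :
    G.IsTree := by
  refine isTree_iff_connected_and_card.2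
    ⟨hG, le_antisymm ?_ hG.card_vert_le_card_edgeSet_add_one⟩
  have hedge : ∀ e ∈ G.edgeSet, e.inf < e.sup ∧ G.Adj e.sup e.inf := by
    refine Sym2.ind fun a b hab => ?_
    rcases (G.ne_of_adj hab).lt_or_gt with hlt | hlt
    · simpa [hlt.le] using ⟨hlt, hab.symm⟩
    · simpa [hlt.le] using ⟨hlt, hab⟩
  have := hG.nonempty
  obtain ⟨r, hr⟩ : ∃ r : ι, ∀ i, r ≤ i := by
    simpa using Finite.exists_min (id : ι → ι)
  -- An edge is determined by its larger end, which is never the minimum `r`.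
  let f : Option G.edgeSet → ι := fun o => o.elim r fun e => e.1.sup
  have hf : Function.Injective f := by
    rintro (_ | ⟨e, he⟩) (_ | ⟨e', he'⟩) hee <;>
      simp only [f, Option.elim_none, Option.elim_some] at hee
    · rfl
    · exact absurd (hr e'.inf) (not_le.mpr (hee ▸ (hedge e' he').1))
    · exact absurd (hr e.inf) (not_le.mpr (hee ▸ (hedge e he).1))
    · have hinf := h (hedge e he).2 (hee ▸ (hedge e' he').2) (hedge e he).1
        (hee ▸ (hedge e' he').1)
      exact congrArg _ (Subtype.ext (Sym2.inf_eq_inf_and_sup_eq_sup.mp ⟨hinf, hee⟩))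
  simpa [Finite.card_option] using Nat.card_le_card_of_injective f hf

def parentGraph [LinearOrder ι] (par : ι → ι) : SimpleGraph ι :=
  fromRel fun a b => a < b ∧ par b = a

theorem parentGraph_adj_parent [LinearOrder ι] {par : ι → ι} {i : ι} (h : par i < i) :
    (parentGraph par).Adj i (par i) :=
  (fromRel_adj _ _ _).2 ⟨h.ne', Or.inr ⟨h, rfl⟩⟩

theorem parent_eq_of_parentGraph_adj [LinearOrder ι] {par : ι → ι} {i j : ι}
    (h : (parentGraph par).Adj i j) (hji : j < i) : par i = j := by
  rcases ((fromRel_adj _ _ _).1 h).2 with ⟨hij, -⟩ | ⟨-, hpar⟩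
  · exact absurd hij hji.not_gt
  · exact hpar

theorem preconnected_induce_parentGraph [LinearOrder ι] [WellFoundedLT ι] {par : ι → ι}
    {s : Set ι} (h : ∀ i ∈ s, ∀ k ∈ s, k < i → par i ∈ s ∧ par i < i) :
    ((parentGraph par).induce s).Preconnected :=
  preconnected_induce_of_exists_adj_lt fun i hi k hk hki =>
    have ⟨hp, hpi⟩ := h i hi k hk hki
    ⟨par i, hp, hpi, parentGraph_adj_parent hpi⟩

theorem isTree_parentGraph [LinearOrder ι] [Finite ι] [Nonempty ι] {par : ι → ι}
    (h : ∀ i k : ι, k < i → par i < i) : (parentGraph par).IsTree := by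
  refine isTree_of_connected_of_lower_adj_unique ?_ fun i j k hij hik hji hki =>
    (parent_eq_of_parentGraph_adj hij hji).symm.trans (parent_eq_of_parentGraph_adj hik hki)
  have hpre : ((parentGraph par).induce Set.univ).Preconnected :=
    preconnected_induce_parentGraph fun i _ k _ hki => ⟨trivial, h i k hki⟩
  exact ⟨hpre.map (Embedding.induce Set.univ).toHom fun x => ⟨⟨x, trivial⟩, rfl⟩⟩

end SimpleGraph

theorem Nbr.symm {V : Type*} {E : Finset (Finset V)} {x y : V} (h : Nbr E x y) : Nbr E y x :=
  let ⟨e, he, hx, hy⟩ := h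
  ⟨e, he, hy, hx⟩

theorem HGAcyclic.exists_superset_of_pairwise_nbr {V : Type*} {E : Finset (Finset V)}
    (hE : HGAcyclic E) {S : Finset V} (hS : S.Nonempty)
    (hSE : ∀ a ∈ S, ∀ b ∈ S, Nbr E a b) :
    ∃ e ∈ E, S ⊆ e := by
  obtain ⟨ι, T, lab, hT, hlab, hsurj, hrip⟩ := hE
  obtain ⟨t, ht⟩ := hT.exists_forall_mem_of_pairwise_inter_nonempty hS
    (A := fun v => {t | v ∈ lab t}) (fun v _ => hrip v) fun a ha b hb => by
      obtain ⟨e, he, hae, hbe⟩ := hSE a ha b hb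
      obtain ⟨t, rfl⟩ := hsurj e he
      exact ⟨t, hae, hbe⟩
  exact ⟨lab t, hlab t, ht⟩

namespace LayeredJoinTree

open SimpleGraph

section Bags

variable {n : ℕ}

/-- The form in which the absence of disruptive trios is used. With `a = b` it also says that a
position with a later neighbour is a neighbour of itself. -/
def TrioFree (R : Fin n → Fin n → Prop) : Prop :=
  ∀ ⦃a b c⦄, a < c → b < c → R a c → R b c → R a b

variable (R : Fin n → Fin n → Prop) [DecidableRel R]

def bag (i : Fin n) : Finset (Fin n) := {j | j ≤ i ∧ R j i}

def parent (i : Fin n) : Fin n :=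
  if h : ({j | j < i ∧ R j i} : Finset (Fin n)).Nonempty then Finset.max' _ h else ⟨0, i.pos⟩

variable {R}

theorem mem_bag {i j : Fin n} : j ∈ bag R i ↔ j ≤ i ∧ R j i := by
  simp [bag]

theorem parent_lt {i k : Fin n} (hki : k < i) : parent R i < i := by
  unfold parent
  split_ifs with h
  · exact (Finset.mem_filter.1 (Finset.max'_mem _ h)).2.1
  · exact Fin.mk_lt_of_lt_val (Nat.zero_lt_of_lt hki)

theorem le_parent_and_rel {i j : Fin n} (hji : j < i) (hR : R j i) :
    j ≤ parent R i ∧ R (parent R i) i := by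
  have hne : ({j | j < i ∧ R j i} : Finset (Fin n)).Nonempty := ⟨j, by simp [hji, hR]⟩
  rw [parent, dif_pos hne]
  exact ⟨Finset.le_max' _ j (by simp [hji, hR]),
    (Finset.mem_filter.1 (Finset.max'_mem _ hne)).2.2⟩

theorem mem_bag_parent (hR : TrioFree R) {i j : Fin n} (hj : j ∈ bag R i) (hji : j < i) :
    j ∈ bag R (parent R i) := by
  obtain ⟨hjp, hpR⟩ := le_parent_and_rel hji (mem_bag.1 hj).2
  exact mem_bag.2 ⟨hjp, hR hji (parent_lt hji) (mem_bag.1 hj).2 hpR⟩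

theorem rel_of_mem_bag (hsymm : ∀ ⦃a b⦄, R a b → R b a) (hR : TrioFree R) {i a b : Fin n}
    (ha : a ∈ bag R i) (hb : b ∈ bag R i) : R a b := by
  rw [mem_bag] at ha hb
  rcases ha.1.lt_or_eq with hai | rfl
  · rcases hb.1.lt_or_eq with hbi | rfl
    · exact hR hai hbi ha.2 hb.2
    · exact ha.2
  · exact hsymm hb.2

theorem exists_subset_bag {J : Finset (Fin n)} (hJ : J.Nonempty)
    (hJR : ∀ a ∈ J, ∀ b ∈ J, R a b) : ∃ i, J ⊆ bag R i :=
  ⟨J.max' hJ, fun j hj => mem_bag.2 ⟨J.le_max' j hj, hJR j hj _ (J.max'_mem hJ)⟩⟩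

theorem preconnected_induce_mem_image_bag (hR : TrioFree R) {V : Type*} [DecidableEq V]
    {f : Fin n → V} (hf : Function.Injective f) (v : V) :
    ((parentGraph (parent R)).induce {i | v ∈ (bag R i).image f}).Preconnected := by
  refine preconnected_induce_parentGraph fun i hi k hk hki => ⟨?_, parent_lt hki⟩
  simp only [Set.mem_ofPred_eq, Finset.mem_image] at hi hk ⊢
  obtain ⟨j, hj, rfl⟩ := hi
  obtain ⟨j', hj', hjj'⟩ := hk
  obtain rfl := hf hjj'
  exact ⟨j', mem_bag_parent hR hj ((mem_bag.1 hj').1.trans_lt hki), rfl⟩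

theorem preconnected_induce_parentGraph_lt (m : ℕ) :
    ((parentGraph (parent R)).induce {i : Fin n | (i : ℕ) < m}).Preconnected :=
  preconnected_induce_parentGraph fun _ hi _ _ hki =>
    ⟨(Fin.lt_def.1 (parent_lt hki)).trans hi, parent_lt hki⟩

end Bags

section Positions

variable {V : Type*} [DecidableEq V] {E : Finset (Finset V)} {L : List V}

def idxNbr (E : Finset (Finset V)) (L : List V) (a b : Fin L.length) : Prop :=
  Nbr E (L.get a) (L.get b)

theorem trioFree_idxNbr (hnd : L.Nodup) (hrefl : ∀ v ∈ L, Nbr E v v) (h : ¬ DTrio (Nbr E) L) :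
    TrioFree (idxNbr E L) := by
  intro a b c hac hbc ha hb
  by_contra hab
  rcases eq_or_ne a b with rfl | hne
  · exact hab (hrefl _ (L.get_mem a))
  refine h ⟨_, _, _, L.get_mem a, L.get_mem b, L.get_mem c,
    (List.nodup_iff_injective_get.1 hnd).ne hne, hab, ha, hb, ?_, ?_⟩ <;>
    rwa [List.get_idxOf hnd, List.get_idxOf hnd]

variable [DecidableRel (idxNbr E L)]

theorem image_bag_subset_take (i : Fin L.length) :
    (bag (idxNbr E L) i).image L.get ⊆ (L.take ((i : ℕ) + 1)).toFinset := by
  simp only [Finset.image_subset_iff, mem_bag, List.mem_toFinset]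
  rintro j ⟨hji, -⟩
  exact List.mem_take_iff_getElem.2 ⟨j, by simp [Fin.le_def.1 hji], rfl⟩

theorem exists_superset_image_bag (hE : HGAcyclic E) (hR : TrioFree (idxNbr E L))
    {i : Fin L.length} (hi : i ∈ bag (idxNbr E L) i) :
    ∃ e ∈ E, (bag (idxNbr E L) i).image L.get ⊆ e := by
  refine hE.exists_superset_of_pairwise_nbr ⟨_, Finset.mem_image_of_mem _ hi⟩ ?_
  simp only [Finset.forall_mem_image]
  exact fun a ha b hb => rel_of_mem_bag (R := idxNbr E L) (fun _ _ => Nbr.symm) hR ha hb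

theorem exists_subset_image_bag [Nonempty (Fin L.length)] {e : Finset V} (he : e ∈ E)
    (heL : ∀ v ∈ e, v ∈ L) : ∃ i, e ⊆ (bag (idxNbr E L) i).image L.get := by
  rcases e.eq_empty_or_nonempty with rfl | ⟨v, hv⟩
  · exact ⟨Classical.arbitrary _, Finset.empty_subset _⟩
  obtain ⟨i, hi⟩ := exists_subset_bag (R := idxNbr E L) (J := {j | L.get j ∈ e})
    (by obtain ⟨j, rfl⟩ := List.mem_iff_get.1 (heL v hv); exact ⟨j, by simpa⟩)
    fun a ha b hb => ⟨e, he, by simpa using ha, by simpa using hb⟩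
  refine ⟨i, fun v hv => ?_⟩
  obtain ⟨j, rfl⟩ := List.mem_iff_get.1 (heL v hv)
  exact Finset.mem_image_of_mem _ (hi (by simpa))

end Positions

end LayeredJoinTree

open SimpleGraph LayeredJoinTree

/-- If a full acyclic CQ has no disruptive trio with respect to a
total lexicographic order `L` of its variables, then it has a layered join tree
with respect to `L`. -/
theorem exists_layered_join_tree {V : Type*} [DecidableEq V]
    (E : Finset (Finset V)) (L : List V)
    (hnd : L.Nodup) (hne : L ≠ [])
    (hcover : ∀ e ∈ E, ∀ v ∈ e, v ∈ L)
    (hvars : ∀ v ∈ L, ∃ e ∈ E, v ∈ e)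
    (hacyc : HGAcyclic E)
    (htrio : ¬ DTrio (Nbr E) L) :
    Nonempty (LayeredJoinTree E L) := by
  classical
  have hrefl : ∀ v ∈ L, Nbr E v v := fun v hv =>
    let ⟨e, he, hve⟩ := hvars v hv
    ⟨e, he, hve, hve⟩
  have hR : TrioFree (idxNbr E L) := trioFree_idxNbr hnd hrefl htrio
  have hself (i : Fin L.length) : i ∈ bag (idxNbr E L) i :=
    mem_bag.2 ⟨le_rfl, hrefl _ (L.get_mem i)⟩
  have : Nonempty (Fin L.length) := ⟨⟨0, List.length_pos_iff.2 hne⟩⟩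
  exact ⟨{ T := parentGraph (parent (idxNbr E L))
           isTree := isTree_parentGraph fun _ _ => parent_lt
           lab := fun i => (bag (idxNbr E L) i).image L.get
           incl1 := fun i => exists_superset_image_bag hacyc hR (hself i)
           incl2 := fun e he => exists_subset_image_bag he (hcover e he)
           rip := preconnected_induce_mem_image_bag hR (List.nodup_iff_injective_get.1 hnd)
           layerMem := fun i => Finset.mem_image_of_mem _ (hself i)
           layerSub := image_bag_subset_take
           prefixConn := preconnected_induce_parentGraph_lt }⟩
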